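/- Fix T > 0. Let ψ^T(t,r) = 2·arctan(r/(T−t)) and ψ̂^T(t,r) := r·ψ^T_r(t,r) + 2·ψ^T(t,r). Then for every t ∈ (0,T), ∫₀^{T−t} ( ψ̂^T_t(t,r)² + ψ̂^T_r(t,r)² ) dr = (T−t)^{−1} · ∫₀¹ (1+ρ²) g(ρ)² dρ, where g(ρ) := 2(3+ρ²)/(1+ρ²)². In particular this higher-energy quantity blows up like (T−t)^{−1} as t → T−. -/

import Mathlib

/-- The fundamental self-similar solution `ψ^T(t,r) = 2 arctan(r/(T−t))`. -/
noncomputable def psiT (T t r : ℝ) : ℝ := 2 * Real.arctan (r / (T - t))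

/-- The transformed field `ψ̂^T(t,r) = r·ψ^T_r(t,r) + 2·ψ^T(t,r)`. -/
noncomputable def psiHatT (T t r : ℝ) : ℝ :=
  r * deriv (fun y => psiT T t y) r + 2 * psiT T t r

/-!
`ψ^T` is self-similar, `ψ^T(t,r) = 2 arctan ρ` with `ρ = r/(T−t)`, hence so is
`ψ̂^T(t,r) = G(ρ)` with `G(ρ) = 2ρ/(1+ρ²) + 4 arctan ρ`, whose derivative is exactly
`g(ρ) = 2(3+ρ²)/(1+ρ²)²`. The chain rule gives `ψ̂_r = g(ρ)/(T−t)` and `ψ̂_t = ρ g(ρ)/(T−t)`,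
so the integrand is `(1+ρ²) g(ρ)² / (T−t)²`, and the substitution `r = (T−t)ρ` yields the
factor `(T−t)⁻¹`.
-/

noncomputable def psiHatProfile (ρ : ℝ) : ℝ := 2 * ρ / (1 + ρ ^ 2) + 4 * Real.arctan ρ

lemma hasDerivAt_psiHatProfile (ρ : ℝ) :
    HasDerivAt psiHatProfile (2 * (3 + ρ ^ 2) / (1 + ρ ^ 2) ^ 2) ρ := by
  have hd : 1 + ρ ^ 2 ≠ 0 := by positivity
  have hfrac : HasDerivAt (fun x : ℝ => 2 * x / (1 + x ^ 2))
      ((2 * (1 + ρ ^ 2) - 2 * ρ * (2 * ρ)) / (1 + ρ ^ 2) ^ 2) ρ := by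
    have hnum : HasDerivAt (fun x : ℝ => 2 * x) 2 ρ := by
      simpa using (hasDerivAt_id ρ).const_mul 2
    have hden : HasDerivAt (fun x : ℝ => 1 + x ^ 2) (2 * ρ) ρ := by
      simpa using (hasDerivAt_pow 2 ρ).const_add 1
    exact hnum.div hden hd
  refine (hfrac.add ((Real.hasDerivAt_arctan ρ).const_mul 4)).congr_deriv ?_
  field_simp
  ring

lemma psiHatT_eq_psiHatProfile (T t r : ℝ) (h : T - t ≠ 0) :
    psiHatT T t r = psiHatProfile (r / (T - t)) := by
  have hpsi : HasDerivAt (fun y => psiT T t y)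
      (2 * (1 / (1 + (r / (T - t)) ^ 2) * (1 / (T - t)))) r := by
    have hdiv : HasDerivAt (fun y : ℝ => y / (T - t)) (1 / (T - t)) r := by
      simpa using (hasDerivAt_id r).div_const (T - t)
    exact ((Real.hasDerivAt_arctan (r / (T - t))).comp r hdiv).const_mul 2
  rw [psiHatT, hpsi.deriv, psiHatProfile, psiT]
  field_simp
  ring

lemma hasDerivAt_psiHatT_radial (T t r : ℝ) (h : T - t ≠ 0) :
    HasDerivAt (fun y => psiHatT T t y)
      (2 * (3 + (r / (T - t)) ^ 2) / (1 + (r / (T - t)) ^ 2) ^ 2 * (1 / (T - t))) r := by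
  have hfun : (fun y => psiHatT T t y) = fun y => psiHatProfile (y / (T - t)) :=
    funext fun y => psiHatT_eq_psiHatProfile T t y h
  rw [hfun]
  exact (hasDerivAt_psiHatProfile _).comp r (by simpa using (hasDerivAt_id r).div_const (T - t))

lemma hasDerivAt_psiHatT_time (T t r : ℝ) (h : T - t ≠ 0) :
    HasDerivAt (fun s => psiHatT T s r)
      (2 * (3 + (r / (T - t)) ^ 2) / (1 + (r / (T - t)) ^ 2) ^ 2 * (r / (T - t) ^ 2)) t := by
  have hev : (fun s => psiHatProfile (r / (T - s))) =ᶠ[nhds t] fun s => psiHatT T s r := by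
    have hne : ∀ᶠ s in nhds t, T - s ≠ 0 :=
      ((continuous_const.sub continuous_id).continuousAt (x := t)).eventually_ne h
    filter_upwards [hne] with s hs
    exact (psiHatT_eq_psiHatProfile T s r hs).symm
  have hρ : HasDerivAt (fun s => r / (T - s)) (r / (T - t) ^ 2) t := by
    have hinv := ((hasDerivAt_id t).const_sub T).inv h
    simpa [div_eq_mul_inv] using hinv.const_mul r
  exact ((hasDerivAt_psiHatProfile _).comp t hρ).congr_of_eventuallyEq hev.symm

lemma deriv_psiHatT_sq_add_sq (T t r : ℝ) (h : T - t ≠ 0) :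
    (deriv (fun s => psiHatT T s r) t) ^ 2 + (deriv (fun y => psiHatT T t y) r) ^ 2
      = ((T - t)⁻¹) ^ 2 * ((1 + (r / (T - t)) ^ 2)
          * (2 * (3 + (r / (T - t)) ^ 2) / (1 + (r / (T - t)) ^ 2) ^ 2) ^ 2) := by
  rw [(hasDerivAt_psiHatT_time T t r h).deriv, (hasDerivAt_psiHatT_radial T t r h).deriv]
  field_simp
  ring

lemma intervalIntegral.integral_inv_sq_mul_comp_div_self (f : ℝ → ℝ) {l : ℝ} (hl : l ≠ 0) :
    ∫ r in (0 : ℝ)..l, l⁻¹ ^ 2 * f (r / l) = l⁻¹ * ∫ ρ in (0 : ℝ)..1, f ρ := by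
  rw [intervalIntegral.integral_const_mul, intervalIntegral.integral_comp_div f hl,
    zero_div, div_self hl, smul_eq_mul]
  field_simp

theorem stmt_3 (T : ℝ) : ∀ t ∈ Set.Ioo (0:ℝ) T,
    (∫ r in (0:ℝ)..(T - t),
      ((deriv (fun s => psiHatT T s r) t) ^ 2 + (deriv (fun y => psiHatT T t y) r) ^ 2))
    = (T - t)⁻¹ * ∫ ρ in (0:ℝ)..1, (1 + ρ ^ 2) * (2 * (3 + ρ ^ 2) / (1 + ρ ^ 2) ^ 2) ^ 2 := by
  rintro t ⟨-, htT⟩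
  have hl : T - t ≠ 0 := (sub_pos.mpr htT).ne'
  rw [intervalIntegral.integral_congr fun r _ => deriv_psiHatT_sq_add_sq T t r hl]
  exact intervalIntegral.integral_inv_sq_mul_comp_div_self
    (fun ρ => (1 + ρ ^ 2) * (2 * (3 + ρ ^ 2) / (1 + ρ ^ 2) ^ 2) ^ 2) hl
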